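/- Define g(ρ) = −(1−ρ²) log((1−ρ)/2) − (1+ρ)² log((1+ρ)/2) − 1 for ρ ∈ (0, 1/2]. Then g(ρ) ≥ 0 for all ρ ∈ (0, 1/2]. -/
import Mathlib


noncomputable def g (ρ : ℝ) : ℝ :=
  -(1 - ρ ^ 2) * Real.log ((1 - ρ) / 2) - (1 + ρ) ^ 2 * Real.log ((1 + ρ) / 2) - 1

/-- `g(ρ) ≥ 0` for all `ρ ∈ (0, 1/2]`. -/
theorem stmt5 : ∀ ρ ∈ Set.Ioc (0 : ℝ) (1 / 2), 0 ≤ g ρ := by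
  rintro ρ ⟨h0, h1⟩
  have h2 : (0:ℝ) < 1 - ρ := by linarith
  have h3 : (0:ℝ) < 1 + ρ := by linarith
  have l1 : Real.log (1 - ρ) ≤ -ρ := by
    have := Real.log_le_sub_one_of_pos h2; linarith
  have l2 : Real.log (1 + ρ) ≤ ρ := by
    have := Real.log_le_sub_one_of_pos h3; linarith
  have e1 : Real.log ((1 - ρ) / 2) = Real.log (1 - ρ) - Real.log 2 :=
    Real.log_div (ne_of_gt h2) two_ne_zero
  have e2 : Real.log ((1 + ρ) / 2) = Real.log (1 + ρ) - Real.log 2 :=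
    Real.log_div (ne_of_gt h3) two_ne_zero
  have hl2 : (0.6931:ℝ) ≤ Real.log 2 := by
    have := Real.log_two_gt_d9; linarith
  have h4 : (0:ℝ) < 1 - ρ ^ 2 := by nlinarith
  have b1 : (1 - ρ ^ 2) * Real.log (1 - ρ) ≤ (1 - ρ ^ 2) * (-ρ) :=
    mul_le_mul_of_nonneg_left l1 (le_of_lt h4)
  have b2 : (1 + ρ) ^ 2 * Real.log (1 + ρ) ≤ (1 + ρ) ^ 2 * ρ :=
    mul_le_mul_of_nonneg_left l2 (sq_nonneg _)
  unfold g
  rw [e1, e2]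
  nlinarith [b1, b2, hl2, sq_nonneg ρ, mul_nonneg h0.le h0.le,
    mul_nonneg (mul_nonneg h0.le h0.le) (by linarith : (0:ℝ) ≤ 1/2 - ρ),
    mul_pos h0 h0]
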